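/- In the partition-tree construction for a forest: if at every step one splits the leaf α of the current partition tree maximizing |V' ∩ V_α| into two children each containing at most (2/3)|V' ∩ V_α| of the marked vertices, then in the final tree with p leaves, for any two leaves β, γ one has |V' ∩ V_β| ≤ 3|V' ∩ V_γ|; consequently every leaf satisfies |V'|/(3p) ≤ |V' ∩ V_leaf| ≤ 3|V'|/p. -/

import Mathlib

/-! Splitting the maximal count `m` leaves every count in `[m/3, m]`: the two children because
each is at most `2m/3` and they sum to `m`, the other leaves because `m` was maximal and, by the
invariant, at most three times each of them. Hence the counts stay pairwise within a factor `3`,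
while their sum stays `N`; averaging then places every count in `[N/(3p), 3N/p]`. -/

/-- One step of the greedy partition-tree construction on the multiset of
marked-vertex counts of the current leaves: a maximal count `m` is split into
two counts `a + b = m` with `a ≤ (2/3)m` and `b ≤ (2/3)m`. -/
def SplitStep (s t : Multiset ℕ) : Prop :=
  ∃ m a b : ℕ, m ∈ s ∧ (∀ x ∈ s, x ≤ m) ∧ a + b = m ∧
    3 * a ≤ 2 * m ∧ 3 * b ≤ 2 * m ∧
    t = a ::ₘ b ::ₘ s.erase m

theorem Multiset.card_mul_le_mul_sum {s : Multiset ℕ} {x c : ℕ} (h : ∀ y ∈ s, x ≤ c * y) :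
    Multiset.card s * x ≤ c * s.sum :=
  calc Multiset.card s * x = Multiset.card (s.map (c * ·)) • x := by simp
    _ ≤ (s.map (c * ·)).sum :=
        Multiset.card_nsmul_le_sum (by simpa only [Multiset.forall_mem_map_iff] using h)
    _ = c * s.sum := by rw [Multiset.sum_map_mul_left, Multiset.map_id']

namespace SplitStep

variable {s t : Multiset ℕ}

theorem sum_eq (h : SplitStep s t) : t.sum = s.sum := by
  obtain ⟨m, a, b, hm, -, hab, -, -, rfl⟩ := h
  rw [← Multiset.sum_erase hm, Multiset.sum_cons, Multiset.sum_cons, ← hab, add_assoc]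

theorem le_three_mul (h : SplitStep s t) (hs : ∀ x ∈ s, ∀ y ∈ s, x ≤ 3 * y) :
    ∀ x ∈ t, ∀ y ∈ t, x ≤ 3 * y := by
  obtain ⟨m, a, b, hm, hmax, hab, ha, hb, rfl⟩ := h
  have hbounds : ∀ x ∈ a ::ₘ b ::ₘ s.erase m, x ≤ m ∧ m ≤ 3 * x := by
    intro x hx
    rcases Multiset.mem_cons.1 hx with rfl | hx
    · omega
    rcases Multiset.mem_cons.1 hx with rfl | hx
    · omega
    have hx := Multiset.mem_of_mem_erase hx
    exact ⟨hmax x hx, hs m hm x hx⟩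
  intro x hx y hy
  have := hbounds x hx
  have := hbounds y hy
  omega

theorem sum_eq_of_reflTransGen (h : Relation.ReflTransGen SplitStep s t) : t.sum = s.sum := by
  induction h with
  | refl => rfl
  | tail _ hstep ih => rw [hstep.sum_eq, ih]

theorem le_three_mul_of_reflTransGen (h : Relation.ReflTransGen SplitStep s t)
    (hs : ∀ x ∈ s, ∀ y ∈ s, x ≤ 3 * y) : ∀ x ∈ t, ∀ y ∈ t, x ≤ 3 * y := by
  induction h with
  | refl => exact hs
  | tail _ hstep ih => exact hstep.le_three_mul ih

end SplitStep

/-- In the partition-tree construction: starting from the single count `N`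
(`N = |V'|`) and repeatedly splitting the leaf with the largest marked count so
that each child gets at most `2/3` of its parent's marked vertices, the final
`p` leaf counts are pairwise within a factor `3` of each other; consequently
every leaf count lies in `[N/(3p), 3N/p]`. -/
theorem stmt15 (N p : ℕ) (s : Multiset ℕ)
    (h : Relation.ReflTransGen SplitStep ({N} : Multiset ℕ) s)
    (hcard : Multiset.card s = p) :
    (∀ x ∈ s, ∀ y ∈ s, x ≤ 3 * y) ∧
    (∀ x ∈ s, N ≤ 3 * p * x ∧ x * p ≤ 3 * N) := by
  have hbal : ∀ x ∈ s, ∀ y ∈ s, x ≤ 3 * y :=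
    SplitStep.le_three_mul_of_reflTransGen h
      (by simp only [Multiset.mem_singleton, forall_eq]; omega)
  have hsum : s.sum = N := by simpa using SplitStep.sum_eq_of_reflTransGen h
  refine ⟨hbal, fun x hx => ⟨?_, ?_⟩⟩
  · calc N = s.sum := hsum.symm
      _ ≤ Multiset.card s • (3 * x) := Multiset.sum_le_card_nsmul s _ fun y hy => hbal y hy x hx
      _ = 3 * p * x := by rw [hcard, smul_eq_mul]; ring
  · calc x * p = Multiset.card s * x := by rw [hcard, mul_comm]
      _ ≤ 3 * s.sum := Multiset.card_mul_le_mul_sum (hbal x hx)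
      _ = 3 * N := by rw [hsum]
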